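/- Let G be a 3-connected finite simple graph and (Y,S,Z) a proper separation of G of order at most 3 with |Y| = 1 and S an independent set of G (i.e., a degenerate separation). Then the torso G⟦Z ∪ S⟧ is not a minor of G. -/

import Mathlib

variable {V : Type*} {W : Type*}

/-- A separation (Y,S,Z) of a graph: pairwise disjoint sets covering the vertex set,
with no edge between Y and Z. -/
def IsSeparation (G : SimpleGraph V) (Y S Z : Set V) : Prop :=
  Disjoint Y S ∧ Disjoint Y Z ∧ Disjoint S Z ∧ Y ∪ S ∪ Z = Set.univ ∧
    ∀ y ∈ Y, ∀ z ∈ Z, ¬ G.Adj y z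

/-- `G` is `k`-connected: more than `k` vertices and no proper separation of order `< k`. -/
def KConnected (k : ℕ) (G : SimpleGraph V) : Prop :=
  k < Nat.card V ∧
    ∀ Y S Z : Set V, IsSeparation G Y S Z → Y.Nonempty → Z.Nonempty → k ≤ S.ncard

/-- `G` is quasi-4-connected. -/
def Quasi4Connected (G : SimpleGraph V) : Prop :=
  KConnected 3 G ∧
    ∀ Y S Z : Set V, IsSeparation G Y S Z → S.ncard = 3 → Y.ncard ≤ 1 ∨ Z.ncard ≤ 1

/-- `T` is a `G`-tangle of order `k`. -/
def IsTangle (G : SimpleGraph V) (k : ℕ) (T : Set (Set V × Set V × Set V)) : Prop :=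
  (∀ p ∈ T, IsSeparation G p.1 p.2.1 p.2.2 ∧ p.2.1.ncard < k) ∧
  (∀ Y S Z : Set V, IsSeparation G Y S Z → S.ncard < k →
    (Y, S, Z) ∈ T ∨ (Z, S, Y) ∈ T) ∧
  (∀ p₁ ∈ T, ∀ p₂ ∈ T, ∀ p₃ ∈ T,
    (p₁.2.2 ∩ p₂.2.2 ∩ p₃.2.2 : Set V).Nonempty ∨
      ∃ u v : V, G.Adj u v ∧ (u ∈ p₁.2.2 ∨ v ∈ p₁.2.2) ∧
        (u ∈ p₂.2.2 ∨ v ∈ p₂.2.2) ∧ (u ∈ p₃.2.2 ∨ v ∈ p₃.2.2)) ∧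
  (∀ p ∈ T, (p.2.2 : Set V).Nonempty)

/-- The order `⪯` on separations: (Y,S,Z) ⪯ (Y',S',Z') iff S ∪ Z ⊊ S' ∪ Z', or
S ∪ Z = S' ∪ Z' and S ⊆ S'. -/
def SepLE (p q : Set V × Set V × Set V) : Prop :=
  p.2.1 ∪ p.2.2 ⊂ q.2.1 ∪ q.2.2 ∨
    (p.2.1 ∪ p.2.2 = q.2.1 ∪ q.2.2 ∧ p.2.1 ⊆ q.2.1)

/-- `p` is a `⪯`-minimal element of `T`. -/
def IsMinimalIn (T : Set (Set V × Set V × Set V)) (p : Set V × Set V × Set V) : Prop :=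
  p ∈ T ∧ ∀ q ∈ T, SepLE q p → q = p

/-- Two separations are orthogonal. (They cross if they are not orthogonal.) -/
def SepOrthogonal (p q : Set V × Set V × Set V) : Prop :=
  (p.1 ∪ p.2.1) ∩ (q.1 ∪ q.2.1) ⊆ p.2.1 ∩ q.2.1

/-- A separation (Y,S,Z) is degenerate: |Y| = 1 and S is an independent set. -/
def Degenerate (G : SimpleGraph V) (Y S Z : Set V) : Prop :=
  Y.ncard = 1 ∧ ∀ u ∈ S, ∀ v ∈ S, ¬ G.Adj u v

/-- The neighbourhood N(X): vertices outside X adjacent to a vertex of X. -/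
def Nbhd (G : SimpleGraph V) (X : Set V) : Set V :=
  {v | v ∉ X ∧ ∃ u ∈ X, G.Adj u v}

/-- `C` is (the vertex set of) a connected component of `G − X`. -/
def IsCompOutside (G : SimpleGraph V) (X C : Set V) : Prop :=
  C ⊆ Xᶜ ∧ (G.induce C).Connected ∧ ∀ u ∈ C, ∀ v : V, v ∉ X → G.Adj u v → v ∈ C

/-- The torso `G⟦X⟧` of `X` in `G`. -/
def torso (G : SimpleGraph V) (X : Set V) : SimpleGraph X where
  Adj u v := u ≠ v ∧ (G.Adj (u : V) (v : V) ∨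
    ∃ C : Set V, IsCompOutside G X C ∧ (u : V) ∈ Nbhd G C ∧ (v : V) ∈ Nbhd G C)
  symm := by
    constructor
    rintro u v ⟨hne, h | ⟨C, hC, hu, hv⟩⟩
    · exact ⟨hne.symm, Or.inl h.symm⟩
    · exact ⟨hne.symm, Or.inr ⟨C, hC, hv, hu⟩⟩
  loopless := by
    constructor
    intro u h
    exact h.1 rfl

/-- `H` is a minor of `G`. -/
def IsMinor (H : SimpleGraph W) (G : SimpleGraph V) : Prop :=
  ∃ M : W → Set V,
    (∀ w : W, (G.induce (M w)).Connected) ∧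
    (Pairwise fun w w' : W => Disjoint (M w) (M w')) ∧
    ∀ w w' : W, H.Adj w w' → ∃ u ∈ M w, ∃ v ∈ M w', G.Adj u v

/-- `M` is a faithful model of the graph `H` (with vertex set `X ⊆ V(G)`) in `G`. -/
def FaithfulModel (G : SimpleGraph V) (X : Set V) (H : SimpleGraph X)
    (M : X → Set V) : Prop :=
  (∀ w : X, (w : V) ∈ M w) ∧
  (∀ w : X, (G.induce (M w)).Connected) ∧
  (Pairwise fun w w' : X => Disjoint (M w) (M w')) ∧
  ∀ w w' : X, H.Adj w w' → ∃ u ∈ M w, ∃ v ∈ M w', G.Adj u v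

/-- `H` (a graph with vertex set `X ⊆ V(G)`) is a faithful minor of `G`. -/
def IsFaithfulMinor (G : SimpleGraph V) (X : Set V) (H : SimpleGraph X) : Prop :=
  ∃ M : X → Set V, FaithfulModel G X H M

/-- The projection of a separation of `G` to a minor with model `M`. -/
def projSep {X : Set V} (M : X → Set V) (p : Set V × Set V × Set V) :
    Set X × Set X × Set X :=
  ({w : X | M w ⊆ p.1}, {w : X | (M w ∩ p.2.1).Nonempty}, {w : X | M w ⊆ p.2.2})

/-- The graph TH₊₃: vertices 0,1,2,3 are v₁,v₂,v₃,v₄ (pairwise adjacent); 4,5,6 are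
w₁,w₂,w₃ with w₁ ~ v₁,v₂,v₃, w₂ ~ v₁,v₂,v₄, w₃ ~ v₁,v₃,v₄. -/
def TH3 : SimpleGraph (Fin 7) :=
  SimpleGraph.fromRel (fun u v =>
    (u.val < 4 ∧ v.val < 4) ∨
    (u.val = 4 ∧ (v.val = 0 ∨ v.val = 1 ∨ v.val = 2)) ∨
    (u.val = 5 ∧ (v.val = 0 ∨ v.val = 1 ∨ v.val = 3)) ∨
    (u.val = 6 ∧ (v.val = 0 ∨ v.val = 2 ∨ v.val = 3)))

/-- The graph TR₊₃: vertices 0,1,2 are v₁,v₂,v₃ (pairwise adjacent); 3,4,5 are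
w₁,w₂,w₃, each adjacent to each of v₁,v₂,v₃. -/
def TR3 : SimpleGraph (Fin 6) :=
  SimpleGraph.fromRel (fun u v =>
    (u.val < 3 ∧ v.val < 3) ∨ (3 ≤ u.val ∧ v.val < 3))

/-- A graph is exceptional if it embeds (injectively, preserving adjacency)
into TH₊₃ or into TR₊₃. -/
def Exceptional (H : SimpleGraph W) : Prop :=
  (∃ f : W → Fin 7, Function.Injective f ∧ ∀ u v : W, H.Adj u v → TH3.Adj (f u) (f v)) ∨
  (∃ f : W → Fin 6, Function.Injective f ∧ ∀ u v : W, H.Adj u v → TR3.Adj (f u) (f v))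

/-- `X` is a `k`-inseparable set of `G`. -/
def KInseparable (G : SimpleGraph V) (k : ℕ) (X : Set V) : Prop :=
  k < X.ncard ∧
    ¬ ∃ Y S Z : Set V, IsSeparation G Y S Z ∧ S.ncard ≤ k ∧
      (X ∩ Y).Nonempty ∧ (X ∩ Z).Nonempty

/-- A triconnected region: a maximal 2-inseparable set of size ≥ 4. -/
def TriconnectedRegion (G : SimpleGraph V) (R : Set V) : Prop :=
  KInseparable G 2 R ∧ 4 ≤ R.ncard ∧ ∀ R' : Set V, R ⊂ R' → ¬ KInseparable G 2 R'

/-- `H` is a topological subgraph of `G`. -/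
def IsTopologicalSubgraph (H : SimpleGraph W) (G : SimpleGraph V) : Prop :=
  ∃ (φ : W → V) (P : ∀ u v : W, H.Adj u v → G.Walk (φ u) (φ v)),
    Function.Injective φ ∧
    (∀ u v (h : H.Adj u v), (P u v h).IsPath) ∧
    (∀ u v (h : H.Adj u v), P u v h = (P v u h.symm).reverse) ∧
    (∀ u v (h : H.Adj u v), ∀ x ∈ (P u v h).support,
      x ∈ Set.range φ → x = φ u ∨ x = φ v) ∧
    (∀ u v (h : H.Adj u v), ∀ u' v' (h' : H.Adj u' v'), s(u, v) ≠ s(u', v') →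
      ∀ x ∈ (P u v h).support, x ∈ (P u' v' h').support →
        (x = φ u ∨ x = φ v) ∧ (x = φ u' ∨ x = φ v'))

/-- A quasi-4-connected region of a 3-connected graph. -/
def Quasi4Region (G : SimpleGraph V) (R : Set V) : Prop :=
  IsFaithfulMinor G R (torso G R) ∧ Quasi4Connected (torso G R) ∧
    ∀ C : Set V, IsCompOutside G R C → (Nbhd G C).ncard = 3

/-- A split vertex of a separation (Y₀,S₀,Z₀). -/
def SplitVertex (G : SimpleGraph V) (S₀ Z₀ : Set V) (z : V) : Prop :=
  z ∈ Z₀ ∧ ∀ C : Set V, IsCompOutside G (S₀ ∪ {z}) C → (Nbhd G C).ncard = 3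

/-- The graph obtained from `G` by contracting the edge `s₁s₂` onto `s₁`. -/
def contractEdge (G : SimpleGraph V) (s₁ s₂ : V) : SimpleGraph ({s₂}ᶜ : Set V) where
  Adj u v := u ≠ v ∧ (G.Adj (u : V) (v : V) ∨
    ((u : V) = s₁ ∧ G.Adj (v : V) s₂) ∨ ((v : V) = s₁ ∧ G.Adj (u : V) s₂))
  symm := by
    constructor
    rintro u v ⟨hne, h | h | h⟩
    · exact ⟨hne.symm, Or.inl h.symm⟩
    · exact ⟨hne.symm, Or.inr (Or.inr h)⟩
    · exact ⟨hne.symm, Or.inr (Or.inl h)⟩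
  loopless := by
    constructor
    intro u h
    exact h.1 rfl

/-- `s t` are the endvertices of a crossedge of two crossing non-degenerate minimal
separations of the tangle `T`, with `s ∈ S₁` and `t ∈ S₂`. -/
def IsNondegCrossedge (G : SimpleGraph V) (T : Set (Set V × Set V × Set V))
    (s t : V) : Prop :=
  ∃ p q : Set V × Set V × Set V,
    IsMinimalIn T p ∧ IsMinimalIn T q ∧
    ¬ Degenerate G p.1 p.2.1 p.2.2 ∧ ¬ Degenerate G q.1 q.2.1 q.2.2 ∧
    ¬ SepOrthogonal p q ∧ G.Adj s t ∧ p.2.1 ∩ q.1 = {s} ∧ q.2.1 ∩ p.1 = {t}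

/-!
Write `Y = {y}`. By 3-connectivity `y` has degree `d ≥ 3`; its neighbours all lie in the
independent set `S`, and `{y}` is a component of `G − (Z ∪ S)` with neighbourhood `N(y)`. So the
torso is `G − y` together with a clique on the independent set `N(y)`, and has
`|E(G)| − d + C(d, 2) ≥ |E(G)|` edges. On the other hand a minor `H` of `G` with fewer vertices
than `G`, where `G` has no isolated vertex, has fewer edges than `G`: distinct edges of `H` are
realised by distinct edges of `G` joining distinct branch sets, and some edge of `G` either lies
inside a branch set (if one has two vertices) or meets a vertex outside all branch sets.
-/

section

open Finset SimpleGraph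

variable {G : SimpleGraph V}

lemma Nat.self_le_choose_two {n : ℕ} (hn : 3 ≤ n) : n ≤ n.choose 2 := by
  rw [Nat.choose_two_right, Nat.le_div_iff_mul_le two_pos]
  exact Nat.mul_le_mul_left n (by omega)

lemma IsSeparation.union_eq_compl {Y S Z : Set V} (h : IsSeparation G Y S Z) : Z ∪ S = Yᶜ := by
  obtain ⟨hYS, hYZ, -, hcover, -⟩ := h
  ext v
  have hv : v ∈ Y ∪ S ∪ Z := hcover ▸ Set.mem_univ v
  simp only [Set.mem_union, Set.mem_compl_iff] at hv ⊢
  constructor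
  · rintro (hvZ | hvS) hvY
    exacts [Set.disjoint_left.mp hYZ hvY hvZ, Set.disjoint_left.mp hYS hvY hvS]
  · tauto

lemma KConnected.le_degree [Fintype V] [DecidableRel G.Adj] {k : ℕ} (hG : KConnected k G)
    (v : V) : k ≤ G.degree v := by
  set N : Set V := ↑(G.neighborFinset v)
  have hsep : IsSeparation G {v} N ({v} ∪ N)ᶜ := by
    refine ⟨?_, ?_, ?_, Set.union_compl_self _, ?_⟩
    · simp [N]
    · exact disjoint_compl_right.mono_left Set.subset_union_left
    · exact disjoint_compl_right.mono_left Set.subset_union_right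
    · rintro _ rfl z hz hvz
      exact hz (Or.inr (by simpa [N] using hvz))
  have hN : N.ncard = G.degree v := by
    rw [Set.ncard_coe_finset, card_neighborFinset_eq_degree]
  rcases ({v} ∪ N)ᶜ.eq_empty_or_nonempty with hR | hR
  · have hcard : Nat.card V ≤ 1 + N.ncard := by
      rw [← Set.ncard_univ, ← Set.compl_empty_iff.mp hR]
      exact (Set.ncard_union_le _ _).trans (by rw [Set.ncard_singleton])
    have := hG.1
    omega
  · exact hN ▸ hG.2 _ _ _ hsep (Set.singleton_nonempty v) hR

def JoinsBranchSets (M : W → Set V) (e : Sym2 W) (e' : Sym2 V) : Prop :=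
  ∃ w w' a b, e = s(w, w') ∧ e' = s(a, b) ∧ a ∈ M w ∧ b ∈ M w'

lemma JoinsBranchSets.unique {M : W → Set V} (hM : Pairwise fun w w' => Disjoint (M w) (M w'))
    {e₁ e₂ : Sym2 W} {e' : Sym2 V} (h₁ : JoinsBranchSets M e₁ e')
    (h₂ : JoinsBranchSets M e₂ e') : e₁ = e₂ := by
  have owner : ∀ {a w w'}, a ∈ M w → a ∈ M w' → w = w' := fun ha ha' =>
    hM.eq (Set.not_disjoint_iff.mpr ⟨_, ha, ha'⟩)
  obtain ⟨w₁, w₁', a₁, b₁, rfl, rfl, ha₁, hb₁⟩ := h₁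
  obtain ⟨w₂, w₂', a₂, b₂, rfl, he, ha₂, hb₂⟩ := h₂
  rcases Sym2.eq_iff.mp he with ⟨rfl, rfl⟩ | ⟨rfl, rfl⟩
  · rw [owner ha₁ ha₂, owner hb₁ hb₂]
  · rw [owner ha₁ hb₂, owner hb₁ ha₂, Sym2.eq_swap]

lemma exists_edge_not_joinsBranchSets [Finite W] {M : W → Set V}
    (hconn : ∀ w, (G.induce (M w)).Connected)
    (hM : Pairwise fun w w' => Disjoint (M w) (M w')) (hcard : Nat.card W < Nat.card V)
    (hG : ∀ v, ∃ u, G.Adj v u) :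
    ∃ m ∈ G.edgeSet, ∀ e, ¬ e.IsDiag → ¬ JoinsBranchSets M e m := by
  by_cases hsub : ∀ w, (M w).Subsingleton
  · choose f hf using fun w => Set.nonempty_coe_sort.mp (hconn w).nonempty
    obtain ⟨v, hv⟩ : ∃ v, v ∉ Set.range f := by
      by_contra! hsurj
      exact hcard.not_ge (Nat.card_le_card_of_surjective f hsurj)
    have hvM : ∀ w, v ∉ M w := fun w hw => hv ⟨w, hsub w (hf w) hw⟩
    obtain ⟨u, hvu⟩ := hG v
    refine ⟨s(v, u), hvu, ?_⟩
    rintro _ - ⟨w, w', a, b, rfl, he, ha, hb⟩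
    rcases Sym2.eq_iff.mp he with ⟨rfl, -⟩ | ⟨rfl, -⟩
    exacts [hvM w ha, hvM w' hb]
  · obtain ⟨w₀, hw₀⟩ := not_forall.mp hsub
    have : Nontrivial (M w₀) := Set.nontrivial_coe_sort.mpr (Set.not_subsingleton_iff.mp hw₀)
    obtain ⟨a, ha⟩ := Set.nonempty_coe_sort.mp (hconn w₀).nonempty
    obtain ⟨⟨b, hb⟩, hab⟩ := (hconn w₀).preconnected.exists_adj_of_nontrivial ⟨a, ha⟩
    refine ⟨s(a, b), hab, ?_⟩
    rintro _ hdiag ⟨w, w', a', b', rfl, he, ha', hb'⟩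
    have owner : ∀ {c w}, c ∈ M w → c ∈ M w₀ → w = w₀ := fun hc hc₀ =>
      hM.eq (Set.not_disjoint_iff.mpr ⟨_, hc, hc₀⟩)
    apply hdiag
    rcases Sym2.eq_iff.mp he with ⟨rfl, rfl⟩ | ⟨rfl, rfl⟩
    · simp [owner ha' ha, owner hb' hb]
    · simp [owner ha' hb, owner hb' ha]

lemma IsMinor.card_edgeFinset_lt [Finite W] {H : SimpleGraph W}
    [Fintype H.edgeSet] [Fintype G.edgeSet] (hHG : IsMinor H G)
    (hcard : Nat.card W < Nat.card V) (hG : ∀ v, ∃ u, G.Adj v u) :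
    #H.edgeFinset < #G.edgeFinset := by
  classical
  obtain ⟨M, hconn, hM, hedge⟩ := hHG
  obtain ⟨m, hm, hmiss⟩ := exists_edge_not_joinsBranchSets hconn hM hcard hG
  have hm' : m ∈ G.edgeFinset := mem_edgeFinset.mpr hm
  have hle : #H.edgeFinset ≤ #(G.edgeFinset.erase m) := by
    refine card_le_card_of_forall_subsingleton (JoinsBranchSets M) ?_
      fun _ _ _ h₁ _ h₂ => h₁.2.unique hM h₂.2
    intro e he
    induction e using Sym2.ind with
    | _ w w' =>
      have hadj : H.Adj w w' := mem_edgeFinset.mp he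
      obtain ⟨a, ha, b, hb, hab⟩ := hedge w w' hadj
      have hjoin : JoinsBranchSets M s(w, w') s(a, b) := ⟨w, w', a, b, rfl, rfl, ha, hb⟩
      refine ⟨s(a, b), mem_erase.mpr ⟨?_, mem_edgeFinset.mpr hab⟩, hjoin⟩
      rintro rfl
      exact hmiss _ (H.not_isDiag_of_mem_edgeSet hadj) hjoin
  rw [card_erase_of_mem hm'] at hle
  have := card_pos.mpr ⟨m, hm'⟩
  omega

lemma torso_adj_of_adj {X : Set V} {u v : X} (h : G.Adj u v) : (torso G X).Adj u v :=
  ⟨fun huv => h.ne (congrArg Subtype.val huv), Or.inl h⟩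

lemma isCompOutside_singleton (y : V) : IsCompOutside G {y}ᶜ {y} := by
  refine ⟨by simp, ?_, ?_⟩
  · have : Subsingleton ({y} : Set V) := Set.subsingleton_coe _ |>.mpr Set.subsingleton_singleton
    exact connected_iff _ |>.mpr ⟨fun a b => Subsingleton.elim a b ▸ Reachable.refl a,
      ⟨⟨y, rfl⟩⟩⟩
  · intro _ _ v hv _
    simpa using hv

lemma torso_compl_singleton_adj_of_adj_adj {y : V} {a b : ({y}ᶜ : Set V)} (hab : a ≠ b)
    (ha : G.Adj y a) (hb : G.Adj y b) : (torso G {y}ᶜ).Adj a b :=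
  ⟨hab, Or.inr ⟨{y}, isCompOutside_singleton y, ⟨a.2, y, rfl, ha⟩, ⟨b.2, y, rfl, hb⟩⟩⟩

lemma card_edgeFinset_add_choose_le_torso [Fintype V] [DecidableRel G.Adj]
    (y : V) [Fintype (torso G {y}ᶜ).edgeSet]
    (hind : ∀ a b, G.Adj y a → G.Adj y b → ¬ G.Adj a b) :
    #G.edgeFinset + (G.degree y).choose 2 ≤ #(torso G {y}ᶜ).edgeFinset + G.degree y := by
  classical
  set T := (torso G {y}ᶜ).map (Function.Embedding.subtype _)
  have hT : #T.edgeFinset = #(torso G {y}ᶜ).edgeFinset := by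
    convert card_edgeFinset_map _ _
  have hD : #(G.deleteIncidenceSet y).edgeFinset + G.degree y = #G.edgeFinset := by
    rw [edgeFinset_deleteIncidenceSet_eq_sdiff, ← card_incidenceFinset_eq_degree,
      card_sdiff_add_card_eq_card (G.incidenceFinset_subset y)]
  set D := (G.deleteIncidenceSet y).edgeFinset
  set P := (G.neighborFinset y).offDiag.image Sym2.mk.uncurry
  have hP : #P = (G.degree y).choose 2 := by
    rw [Sym2.card_image_offDiag, card_neighborFinset_eq_degree]
  have hDP : Disjoint D P := by
    refine disjoint_left.mpr fun e heD heP => ?_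
    obtain ⟨⟨a, b⟩, hab, rfl⟩ := mem_image.mp heP
    obtain ⟨ha, hb, -⟩ := mem_offDiag.mp hab
    exact hind a b (mem_neighborFinset _ _ _ |>.mp ha) (mem_neighborFinset _ _ _ |>.mp hb)
      (deleteIncidenceSet_adj.mp (mem_edgeFinset.mp heD)).1
  have hsub : D ∪ P ⊆ T.edgeFinset := by
    intro e he
    rw [mem_edgeFinset]
    rcases mem_union.mp he with heD | heP
    · induction e using Sym2.ind with
      | _ u v =>
        obtain ⟨huv, hu, hv⟩ := deleteIncidenceSet_adj.mp (mem_edgeFinset.mp heD)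
        exact (map_adj _ _ _ _).mpr ⟨⟨u, hu⟩, ⟨v, hv⟩, torso_adj_of_adj huv, rfl, rfl⟩
    · obtain ⟨⟨a, b⟩, hab, rfl⟩ := mem_image.mp heP
      obtain ⟨ha, hb, hne⟩ := mem_offDiag.mp hab
      have ha' := (mem_neighborFinset _ _ _).mp ha
      have hb' := (mem_neighborFinset _ _ _).mp hb
      exact (map_adj _ _ _ _).mpr ⟨⟨a, ha'.ne.symm⟩, ⟨b, hb'.ne.symm⟩,
        torso_compl_singleton_adj_of_adj_adj (Subtype.coe_ne_coe.mp hne) ha' hb', rfl, rfl⟩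
  have hcard := card_le_card hsub
  rw [card_union_of_disjoint hDP] at hcard
  omega

end

theorem statement13 {V : Type*} [Fintype V] (G : SimpleGraph V)
    (h3 : KConnected 3 G) (Y S Z : Set V)
    (hsep : IsSeparation G Y S Z) (hdeg : Degenerate G Y S Z) :
    ¬ IsMinor (torso G (Z ∪ S)) G := by
  classical
  obtain ⟨hY, hS⟩ := hdeg
  obtain ⟨y, rfl⟩ := Set.ncard_eq_one.mp hY
  have hX := hsep.union_eq_compl
  have hNS : ∀ a, G.Adj y a → a ∈ S := fun a ha => by
    have ha' : a ∈ ({y}ᶜ : Set V) := ha.ne'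
    rw [← hX] at ha'
    exact ha'.resolve_left fun haZ => hsep.2.2.2.2 y rfl a haZ ha
  rw [hX]
  intro hminor
  have htorso := card_edgeFinset_add_choose_le_torso y fun a b ha hb =>
    hS a (hNS a ha) b (hNS b hb)
  have hminor_lt := hminor.card_edgeFinset_lt (Finite.card_subtype_lt fun h => h rfl)
    fun v => G.degree_pos_iff_exists_adj v |>.mp (by have := h3.le_degree v; omega)
  have := Nat.self_le_choose_two (h3.le_degree y)
  omega
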